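/- For sign sequences X and Y, define X < Y iff one of: (1) X is simpler than Y and Y(dom X) = +; (2) Y is simpler than X and X(dom Y) = −; (3) there is a sign sequence Z simpler than both X and Y with X(dom Z) = − and Y(dom Z) = +. Then < is a strict total order on sign sequences: it is irreflexive, transitive, and any two distinct sign sequences are comparable. -/

import Mathlib

/-- A sign sequence: a "function" from the ordinal `dom` to `Bool`
(`true` = `+`, `false` = `-`); only values of `val` below `dom` are relevant. -/
structure SignSeq where
  dom : Ordinal
  val : Ordinal → Bool

/-- `X` is simpler than `Y`. -/
def Simpler (X Y : SignSeq) : Prop :=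
  X.dom < Y.dom ∧ ∀ β < X.dom, X.val β = Y.val β

/-- The sign-expansion order on sign sequences. -/
def SLt (X Y : SignSeq) : Prop :=
  (Simpler X Y ∧ Y.val X.dom = true) ∨
  (Simpler Y X ∧ X.val Y.dom = false) ∨
  (∃ Z : SignSeq, Simpler Z X ∧ Simpler Z Y ∧ X.val Z.dom = false ∧ Y.val Z.dom = true)

/-- Extensional equality of sign sequences: same domain and same signs below it. -/
def ExtEq (X Y : SignSeq) : Prop :=
  X.dom = Y.dom ∧ ∀ β < X.dom, X.val β = Y.val β

/-- `limsup` of the domains of a sequence of sign sequences. -/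
noncomputable def limsupDom (X : ℕ → SignSeq) : Ordinal :=
  ⨅ n : ℕ, ⨆ m : ℕ, (X (n + m)).dom

/-- The limit birthday: least limit ordinal `≥ limsup` of the domains. -/
noncomputable def limitBirthday (X : ℕ → SignSeq) : Ordinal :=
  sInf {α : Ordinal | limsupDom X ≤ α ∧ Order.IsSuccLimit α}

/-- Convergence of a sequence of sign sequences to `L`. -/
def ConvergesTo (X : ℕ → SignSeq) (L : SignSeq) : Prop :=
  L.dom ≤ limitBirthday X ∧
  ∀ α < limitBirthday X, ∃ n₀ : ℕ, ∀ n > n₀,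
    ∀ β < min α (min (X n).dom L.dom), (X n).val β = L.val β

/-- The natural number `n` as `n` pluses. -/
def natSeq (n : ℕ) : SignSeq := ⟨(n : Ordinal), fun _ => true⟩

/-- `ω` as `ω` pluses. -/
noncomputable def omegaSeq : SignSeq := ⟨Ordinal.omega0, fun _ => true⟩

/-! Extend a sign sequence `X` to a `SignType`-valued function on all ordinals, `+1`/`-1` on
`dom X` and `0` beyond it, so that `- < (undefined) < +`. The three clauses of `SLt` then say
precisely that the first ordinal where these functions differ carries a smaller value for `X`
than for `Y`: `SLt` is the lexicographic order on functions `Ordinal → SignType`, which is a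
linear order because the ordinals are well-ordered. -/

namespace SignSeq

noncomputable def sign (X : SignSeq) (β : Ordinal) : SignType :=
  if β < X.dom then (if X.val β then 1 else -1) else 0

variable {X Y : SignSeq} {β δ : Ordinal}

lemma sign_eq_zero_iff : X.sign β = 0 ↔ X.dom ≤ β := by
  unfold sign; split_ifs <;> simp_all

lemma sign_eq_one_iff : X.sign β = 1 ↔ β < X.dom ∧ X.val β = true := by
  unfold sign; split_ifs <;> simp_all

lemma sign_eq_neg_one_iff : X.sign β = -1 ↔ β < X.dom ∧ X.val β = false := by
  unfold sign; split_ifs <;> simp_all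

lemma sign_eq_sign_iff (hX : β < X.dom) (hY : β < Y.dom) :
    X.sign β = Y.sign β ↔ X.val β = Y.val β := by
  unfold sign; rw [if_pos hX, if_pos hY]; cases X.val β <;> cases Y.val β <;> decide

lemma sign_eqOn_iff (h : δ ≤ X.dom) :
    (∀ β < δ, X.sign β = Y.sign β) ↔ δ ≤ Y.dom ∧ ∀ β < δ, X.val β = Y.val β := by
  constructor
  · intro hsign
    have hdom : δ ≤ Y.dom := by
      by_contra! hY
      have hX0 := (hsign Y.dom hY).trans (sign_eq_zero_iff.2 le_rfl)
      exact (sign_eq_zero_iff.1 hX0).not_gt (hY.trans_le h)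
    exact ⟨hdom, fun β hβ =>
      (sign_eq_sign_iff (hβ.trans_le h) (hβ.trans_le hdom)).1 (hsign β hβ)⟩
  · rintro ⟨hdom, hval⟩ β hβ
    exact (sign_eq_sign_iff (hβ.trans_le h) (hβ.trans_le hdom)).2 (hval β hβ)

lemma simpler_iff_sign : Simpler X Y ↔ X.dom < Y.dom ∧ ∀ β < X.dom, X.sign β = Y.sign β := by
  rw [sign_eqOn_iff le_rfl, Simpler]
  exact ⟨fun ⟨hlt, hval⟩ => ⟨hlt, hlt.le, hval⟩, fun ⟨hlt, _, hval⟩ => ⟨hlt, hval⟩⟩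

lemma toLex_sign_lt_iff : toLex X.sign < toLex Y.sign ↔
    ∃ δ, (∀ β < δ, X.sign β = Y.sign β) ∧ X.sign δ < Y.sign δ :=
  Iff.rfl

lemma slt_iff_toLex_sign_lt : SLt X Y ↔ toLex X.sign < toLex Y.sign := by
  rw [toLex_sign_lt_iff]
  constructor
  · rintro (⟨hXY, hY⟩ | ⟨hYX, hX⟩ | ⟨Z, hZX, hZY, hX, hY⟩)
    · obtain ⟨hlt, hsign⟩ := simpler_iff_sign.1 hXY
      refine ⟨X.dom, hsign, ?_⟩
      rw [sign_eq_zero_iff.2 le_rfl, sign_eq_one_iff.2 ⟨hlt, hY⟩]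
      decide
    · obtain ⟨hlt, hsign⟩ := simpler_iff_sign.1 hYX
      refine ⟨Y.dom, fun β hβ => (hsign β hβ).symm, ?_⟩
      rw [sign_eq_zero_iff.2 le_rfl, sign_eq_neg_one_iff.2 ⟨hlt, hX⟩]
      decide
    · obtain ⟨hltX, hsignX⟩ := simpler_iff_sign.1 hZX
      obtain ⟨hltY, hsignY⟩ := simpler_iff_sign.1 hZY
      refine ⟨Z.dom, fun β hβ => (hsignX β hβ).symm.trans (hsignY β hβ), ?_⟩
      rw [sign_eq_neg_one_iff.2 ⟨hltX, hX⟩, sign_eq_one_iff.2 ⟨hltY, hY⟩]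
      decide
  · rintro ⟨δ, hsign, hlt⟩
    rcases hXδ : X.sign δ <;> rcases hYδ : Y.sign δ <;> rw [hXδ, hYδ] at hlt <;>
      try contradiction
    · obtain ⟨hδY, hY⟩ := sign_eq_one_iff.1 hYδ
      obtain ⟨hδX, hval⟩ := (sign_eqOn_iff hδY.le).1 fun β hβ => (hsign β hβ).symm
      obtain rfl := le_antisymm (sign_eq_zero_iff.1 hXδ) hδX
      exact .inl ⟨⟨hδY, fun β hβ => (hval β hβ).symm⟩, hY⟩
    · obtain ⟨hδX, hX⟩ := sign_eq_neg_one_iff.1 hXδ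
      obtain ⟨hδY, hval⟩ := (sign_eqOn_iff hδX.le).1 hsign
      obtain rfl := le_antisymm (sign_eq_zero_iff.1 hYδ) hδY
      exact .inr (.inl ⟨⟨hδX, fun β hβ => (hval β hβ).symm⟩, hX⟩)
    · -- `X` and `Y` split at `δ`: their common part below `δ` is simpler than both
      obtain ⟨hδX, hX⟩ := sign_eq_neg_one_iff.1 hXδ
      obtain ⟨hδY, hY⟩ := sign_eq_one_iff.1 hYδ
      obtain ⟨-, hval⟩ := (sign_eqOn_iff hδX.le).1 hsign
      exact .inr (.inr ⟨⟨δ, X.val⟩, ⟨hδX, fun _ _ => rfl⟩, ⟨hδY, hval⟩, hX, hY⟩)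

lemma extEq_of_sign_eq (h : X.sign = Y.sign) : ExtEq X Y := by
  obtain ⟨hXY, hval⟩ := (sign_eqOn_iff le_rfl).1 fun β _ => congrFun h β
  obtain ⟨hYX, -⟩ := (sign_eqOn_iff (X := Y) (Y := X) le_rfl).1 fun β _ => congrFun h.symm β
  exact ⟨le_antisymm hXY hYX, hval⟩

end SignSeq

/-- The sign-expansion order is a strict total order: irreflexive, transitive,
and any two (extensionally) distinct sign sequences are comparable. -/
theorem slt_strict_total_order :
    (∀ X : SignSeq, ¬ SLt X X) ∧
    (∀ X Y Z : SignSeq, SLt X Y → SLt Y Z → SLt X Z) ∧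
    (∀ X Y : SignSeq, ¬ ExtEq X Y → SLt X Y ∨ SLt Y X) := by
  have key {X Y : SignSeq} := SignSeq.slt_iff_toLex_sign_lt (X := X) (Y := Y)
  refine ⟨fun X h => ?_, fun X Y Z hXY hYZ => ?_, fun X Y hne => ?_⟩
  · exact lt_irrefl _ (key.1 h)
  · exact key.2 ((key.1 hXY).trans (key.1 hYZ))
  · rcases lt_trichotomy (toLex X.sign) (toLex Y.sign) with h | h | h
    · exact .inl (key.2 h)
    · exact absurd (SignSeq.extEq_of_sign_eq (toLex.injective h)) hne
    · exact .inr (key.2 h)
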